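/- arXiv:2303.11620 — 3 statements merged into one kernel-verified Lean document; each statement's English description precedes it below -/
import Mathlib

section
/- Let C_0 be a real symmetric md×md positive semidefinite matrix whose kernel is exactly the column span of a matrix S_0 ∈ R^{md×d} satisfying S_0^T S_0 = m·I_d. Then for every S ∈ R^{md×d} with S^T S = m·I_d, Tr(C_0 S S^T) ≥ (λ_{d+1}(C_0)/2) · min over orthogonal Q ∈ O(d) of ||S - S_0 Q||_F^2, where λ_{d+1}(C_0) is the (d+1)-st smallest eigenvalue of C_0 (i.e., its smallest nonzero eigenvalue). -/
open Matrix
open Polynomial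

lemma auxCT {p q : ℕ} (A : Matrix (Fin p) (Fin q) ℝ) : Aᴴ = Aᵀ := by
  ext i j; simp [conjTranspose_apply]

lemma auxTraceNonneg {k : ℕ} {A : Matrix (Fin k) (Fin k) ℝ} (hA : A.PosSemidef) :
    0 ≤ A.trace := by
  rw [Matrix.trace]
  refine Finset.sum_nonneg fun i _ => ?_
  exact hA.diag_nonneg

open scoped MatrixOrder in
lemma auxTraceMulNonneg' {k : ℕ} {A B : Matrix (Fin k) (Fin k) ℝ}
    (hA : A.PosSemidef) (hB : B.PosSemidef) : 0 ≤ (A * B).trace := by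
  have h1 : CFC.sqrt A * CFC.sqrt A = A := CFC.sqrt_mul_sqrt_self A hA.nonneg
  have h2 : (A * B).trace = (CFC.sqrt A * B * CFC.sqrt A).trace := by
    conv_lhs => rw [← h1]
    rw [Matrix.mul_assoc, Matrix.trace_mul_comm]
  have h3 : (CFC.sqrt A * B * CFC.sqrt A).PosSemidef := by
    have := hB.conjTranspose_mul_mul_same (CFC.sqrt A)
    rwa [(Matrix.nonneg_iff_posSemidef.mp (CFC.sqrt_nonneg A)).1.eq] at this
  rw [h2]; exact auxTraceNonneg h3

lemma auxDot {k l : ℕ} (N : Matrix (Fin l) (Fin k) ℝ) (x : Fin k → ℝ) :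
    x ⬝ᵥ ((Nᵀ * N) *ᵥ x) = (N *ᵥ x) ⬝ᵥ (N *ᵥ x) := by
  rw [← Matrix.mulVec_mulVec, Matrix.dotProduct_mulVec, Matrix.vecMul_transpose]

lemma auxQuadForm {k : ℕ} (c : ℝ) (N : Matrix (Fin k) (Fin k) ℝ) (x : Fin k → ℝ) :
    x ⬝ᵥ ((c • (1 : Matrix (Fin k) (Fin k) ℝ) - Nᵀ * N) *ᵥ x)
      = c * (x ⬝ᵥ x) - (N *ᵥ x) ⬝ᵥ (N *ᵥ x) := by
  rw [Matrix.sub_mulVec, dotProduct_sub, auxDot, Matrix.smul_mulVec, Matrix.one_mulVec,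
    dotProduct_smul, smul_eq_mul]

section
variable {k : ℕ}

lemma auxOpBound {N : Matrix (Fin k) (Fin k) ℝ} {a : ℝ}
    (hb : ((a ^ 2) • (1 : Matrix (Fin k) (Fin k) ℝ) - Nᵀ * N).PosSemidef) (x : Fin k → ℝ) :
    (N *ᵥ x) ⬝ᵥ (N *ᵥ x) ≤ a ^ 2 * (x ⬝ᵥ x) := by
  have := hb.dotProduct_mulVec_nonneg x
  rw [star_trivial] at this
  rw [show x ⬝ᵥ (((a ^ 2) • (1 : Matrix (Fin k) (Fin k) ℝ) - Nᵀ * N) *ᵥ x)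
      = a ^ 2 * (x ⬝ᵥ x) - (N *ᵥ x) ⬝ᵥ (N *ᵥ x) by
    rw [Matrix.sub_mulVec, dotProduct_sub, Matrix.smul_mulVec, Matrix.one_mulVec,
      dotProduct_smul, smul_eq_mul, ← Matrix.mulVec_mulVec, Matrix.dotProduct_mulVec,
      Matrix.vecMul_transpose]] at this
  linarith

lemma auxRayleigh {N : Matrix (Fin k) (Fin k) ℝ} {a : ℝ} (ha : 0 < a)
    (hb : ((a ^ 2) • (1 : Matrix (Fin k) (Fin k) ℝ) - Nᵀ * N).PosSemidef) (x : Fin k → ℝ) :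
    x ⬝ᵥ (N *ᵥ x) ≤ a * (x ⬝ᵥ x) := by
  have h1 : (0:ℝ) ≤ (a • x - N *ᵥ x) ⬝ᵥ (a • x - N *ᵥ x) := by
    have := dotProduct_self_star_nonneg (a • x - N *ᵥ x)
    rwa [star_trivial] at this
  have h2 := auxOpBound hb x
  have h3 : (a • x - N *ᵥ x) ⬝ᵥ (a • x - N *ᵥ x)
      = a ^ 2 * (x ⬝ᵥ x) - 2 * a * (x ⬝ᵥ (N *ᵥ x)) + (N *ᵥ x) ⬝ᵥ (N *ᵥ x) := by
    simp only [sub_dotProduct, dotProduct_sub, smul_dotProduct, dotProduct_smul, smul_eq_mul,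
      dotProduct_comm (N *ᵥ x) x]
    ring
  nlinarith

lemma auxSmulOneSubPSD {N H : Matrix (Fin k) (Fin k) ℝ} {a : ℝ} (ha : 0 < a)
    (hH : H.PosSemidef) (hHH : H * H = Nᵀ * N)
    (hb : ((a ^ 2) • (1 : Matrix (Fin k) (Fin k) ℝ) - Nᵀ * N).PosSemidef) :
    (a • (1 : Matrix (Fin k) (Fin k) ℝ) - H).PosSemidef := by
  have hHt : Hᵀ = H := by
    have := hH.1.eq
    rwa [show Hᴴ = Hᵀ by ext i j; simp [conjTranspose_apply]] at this
  have hb' : ((a ^ 2) • (1 : Matrix (Fin k) (Fin k) ℝ) - Hᵀ * H).PosSemidef := by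
    rwa [hHt, hHH]
  refine PosSemidef.of_dotProduct_mulVec_nonneg ?_ ?_
  · have h1 : (a • (1 : Matrix (Fin k) (Fin k) ℝ) - H)ᴴ = (a • (1 : Matrix (Fin k) (Fin k) ℝ) - H)ᵀ := by
      ext i j; simp [conjTranspose_apply]
    rw [Matrix.IsHermitian, h1, transpose_sub, transpose_smul, transpose_one, hHt]
  · intro x
    rw [star_trivial]
    have h2 := auxRayleigh ha hb' x
    rw [Matrix.sub_mulVec, dotProduct_sub, Matrix.smul_mulVec, Matrix.one_mulVec,
      dotProduct_smul, smul_eq_mul]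
    linarith

open scoped MatrixOrder in
lemma auxPolar (N : Matrix (Fin k) (Fin k) ℝ) {a : ℝ} (ha : 0 < a)
    (hb : ((a ^ 2) • (1 : Matrix (Fin k) (Fin k) ℝ) - Nᵀ * N).PosSemidef)
    (hdet : N.det ≠ 0) :
    ∃ Q : Matrix (Fin k) (Fin k) ℝ, Qᵀ * Q = 1 ∧ (Nᵀ * N).trace ≤ a * (Qᵀ * N).trace := by
  have hMM : (Nᵀ * N).PosSemidef := by
    have := posSemidef_conjTranspose_mul_self N
    rwa [show Nᴴ = Nᵀ by ext i j; simp [conjTranspose_apply]] at this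
  set H := CFC.sqrt (Nᵀ * N) with hHdef
  have hHH : H * H = Nᵀ * N := CFC.sqrt_mul_sqrt_self _ hMM.nonneg
  have hHpsd : H.PosSemidef := Matrix.nonneg_iff_posSemidef.mp (CFC.sqrt_nonneg _)
  have hHt : Hᵀ = H := by
    have := hHpsd.1.eq
    rwa [show Hᴴ = Hᵀ by ext i j; simp [conjTranspose_apply]] at this
  have hHdet : IsUnit H.det := by
    have h1 : H.det * H.det = N.det * N.det := by
      rw [← Matrix.det_mul, hHH, Matrix.det_mul, Matrix.det_transpose]
    refine isUnit_iff_ne_zero.mpr fun h => ?_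
    rw [h, mul_zero] at h1
    exact mul_ne_zero hdet hdet h1.symm
  refine ⟨N * H⁻¹, ?_, ?_⟩
  · rw [transpose_mul, Matrix.transpose_nonsing_inv, hHt, Matrix.mul_assoc,
      ← Matrix.mul_assoc Nᵀ N H⁻¹, ← hHH, Matrix.mul_assoc H H H⁻¹,
      Matrix.mul_nonsing_inv _ hHdet, Matrix.mul_one,
      Matrix.nonsing_inv_mul _ hHdet]
  · have hQM : (N * H⁻¹)ᵀ * N = H := by
      rw [transpose_mul, Matrix.transpose_nonsing_inv, hHt, Matrix.mul_assoc, ← hHH,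
        ← Matrix.mul_assoc, Matrix.nonsing_inv_mul _ hHdet, Matrix.one_mul]
    rw [hQM, ← hHH]
    have hpsd2 : (a • (1 : Matrix (Fin k) (Fin k) ℝ) - H).PosSemidef :=
      auxSmulOneSubPSD ha hHpsd hHH hb
    have h0 : 0 ≤ ((a • (1 : Matrix (Fin k) (Fin k) ℝ) - H) * H).trace :=
      auxTraceMulNonneg' hpsd2 hHpsd
    rw [Matrix.sub_mul, Matrix.smul_mul, Matrix.one_mul, trace_sub, trace_smul, smul_eq_mul] at h0
    linarith

end

section
variable {k : ℕ}

lemma auxEntryBound {Q : Matrix (Fin k) (Fin k) ℝ} (hQ : Qᵀ * Q = 1) (i j : Fin k) :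
    |Q i j| ≤ 1 := by
  have h1 : (Qᵀ * Q) j j = 1 := by rw [hQ]; simp [Matrix.one_apply]
  rw [Matrix.mul_apply] at h1
  simp only [transpose_apply] at h1
  have h2 : Q i j * Q i j ≤ 1 := by
    rw [← h1]
    exact Finset.single_le_sum (f := fun l => Q l j * Q l j) (fun l _ => mul_self_nonneg _) (Finset.mem_univ i)
  exact abs_le_one_iff_mul_self_le_one.mpr h2

lemma auxTraceQBound {Q : Matrix (Fin k) (Fin k) ℝ} (hQ : Qᵀ * Q = 1)
    (N : Matrix (Fin k) (Fin k) ℝ) :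
    |(Qᵀ * N).trace| ≤ ∑ j : Fin k, ∑ i : Fin k, |N i j| := by
  rw [Matrix.trace]
  refine (Finset.abs_sum_le_sum_abs _ _).trans ?_
  refine Finset.sum_le_sum fun j _ => ?_
  rw [Matrix.diag_apply, Matrix.mul_apply]
  refine (Finset.abs_sum_le_sum_abs _ _).trans ?_
  refine Finset.sum_le_sum fun i _ => ?_
  rw [transpose_apply, abs_mul]
  calc |Q i j| * |N i j| ≤ 1 * |N i j| :=
        mul_le_mul_of_nonneg_right (auxEntryBound hQ i j) (abs_nonneg _)
    _ = |N i j| := one_mul _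

lemma auxDiagSumBound (N : Matrix (Fin k) (Fin k) ℝ) :
    |N.trace| ≤ ∑ j : Fin k, ∑ i : Fin k, |N i j| := by
  rw [Matrix.trace]
  refine (Finset.abs_sum_le_sum_abs _ _).trans ?_
  refine Finset.sum_le_sum fun j _ => ?_
  exact Finset.single_le_sum (fun i _ => abs_nonneg (N i j)) (Finset.mem_univ j)

lemma auxPerturbDet (N : Matrix (Fin k) (Fin k) ℝ) {δ : ℝ} (hδ : 0 < δ) :
    ∃ t : ℝ, 0 < t ∧ t < δ ∧ (N + t • 1).det ≠ 0 := by
  have hp : ((-N).charpoly : ℝ[X]) ≠ 0 := (Matrix.charpoly_monic _).ne_zero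
  obtain ⟨t, ht, htr⟩ := (Set.Ioo_infinite (show (0:ℝ) < δ from hδ)).exists_notMem_finset
    ((-N).charpoly.roots.toFinset)
  refine ⟨t, ht.1, ht.2, ?_⟩
  have heval : ((-N).charpoly).eval t = (N + t • 1).det := by
    rw [Matrix.charpoly, ← coe_evalRingHom, RingHom.map_det]
    congr 1
    ext i j
    by_cases h : i = j
    · subst h
      simp [charmatrix_apply_eq, Matrix.add_apply, Matrix.smul_apply, Matrix.one_apply, add_comm]
    · simp [charmatrix_apply_ne _ _ _ h, Matrix.add_apply, Matrix.smul_apply,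
        Matrix.one_apply_ne h]
  intro hc
  rw [← heval] at hc
  exact htr (Multiset.mem_toFinset.mpr ((Polynomial.mem_roots hp).mpr hc))

end

section
variable {k : ℕ}

lemma auxHermOne (c : ℝ) (A : Matrix (Fin k) (Fin k) ℝ) :
    (c • (1 : Matrix (Fin k) (Fin k) ℝ) - Aᵀ * A).IsHermitian := by
  have h : (c • (1 : Matrix (Fin k) (Fin k) ℝ) - Aᵀ * A)ᴴ
      = (c • (1 : Matrix (Fin k) (Fin k) ℝ) - Aᵀ * A)ᵀ := by
    ext i j; simp [conjTranspose_apply]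
  rw [Matrix.IsHermitian, h, transpose_sub, transpose_smul, transpose_one, transpose_mul,
    transpose_transpose]

lemma auxPolarEps (N : Matrix (Fin k) (Fin k) ℝ) {a : ℝ} (ha : 0 < a)
    (hb : ((a ^ 2) • (1 : Matrix (Fin k) (Fin k) ℝ) - Nᵀ * N).PosSemidef)
    {ε : ℝ} (hε : 0 < ε) :
    ∃ Q : Matrix (Fin k) (Fin k) ℝ, Qᵀ * Q = 1 ∧ (Nᵀ * N).trace ≤ a * (Qᵀ * N).trace + ε := by
  set B := ∑ j : Fin k, ∑ i : Fin k, |N i j| with hBdef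
  have hB0 : 0 ≤ B := Finset.sum_nonneg fun _ _ => Finset.sum_nonneg fun _ _ => abs_nonneg _
  set K : ℝ := 3 * B + (a + 1) * k + 1 with hKdef
  have hK0 : 0 < K := by positivity
  obtain ⟨t, ht0, htδ, hdet⟩ := auxPerturbDet N (show (0:ℝ) < min 1 (ε / K) by positivity)
  have ht1 : t < 1 := lt_of_lt_of_le htδ (min_le_left _ _)
  have htε : t * K ≤ ε := by
    have h1 : t ≤ ε / K := le_of_lt (lt_of_lt_of_le htδ (min_le_right _ _))
    calc t * K ≤ (ε / K) * K := mul_le_mul_of_nonneg_right h1 hK0.le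
      _ = ε := div_mul_cancel₀ _ (ne_of_gt hK0)
  set Nt := N + t • (1 : Matrix (Fin k) (Fin k) ℝ) with hNtdef
  have hNtx : ∀ x : Fin k → ℝ, Nt *ᵥ x = N *ᵥ x + t • x := by
    intro x
    rw [hNtdef, Matrix.add_mulVec, Matrix.smul_mulVec, Matrix.one_mulVec]
  have hbt : (((a + t) ^ 2) • (1 : Matrix (Fin k) (Fin k) ℝ) - Ntᵀ * Nt).PosSemidef := by
    refine PosSemidef.of_dotProduct_mulVec_nonneg (auxHermOne _ _) fun x => ?_
    rw [star_trivial]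
    rw [show x ⬝ᵥ ((((a + t) ^ 2) • (1 : Matrix (Fin k) (Fin k) ℝ) - Ntᵀ * Nt) *ᵥ x)
        = (a + t) ^ 2 * (x ⬝ᵥ x) - (Nt *ᵥ x) ⬝ᵥ (Nt *ᵥ x) by
      rw [Matrix.sub_mulVec, dotProduct_sub, Matrix.smul_mulVec, Matrix.one_mulVec,
        dotProduct_smul, smul_eq_mul, ← Matrix.mulVec_mulVec, Matrix.dotProduct_mulVec,
        Matrix.vecMul_transpose]]
    have e1 := auxOpBound hb x
    have e2 := auxRayleigh ha hb x
    have e3 : (Nt *ᵥ x) ⬝ᵥ (Nt *ᵥ x)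
        = (N *ᵥ x) ⬝ᵥ (N *ᵥ x) + 2 * t * (x ⬝ᵥ (N *ᵥ x)) + t * t * (x ⬝ᵥ x) := by
      rw [hNtx x]
      simp only [add_dotProduct, dotProduct_add, smul_dotProduct, dotProduct_smul, smul_eq_mul,
        dotProduct_comm (N *ᵥ x) x]
      ring
    rw [e3]
    nlinarith [mul_nonneg ht0.le (sub_nonneg.mpr e2), mul_nonneg ht0.le ht0.le]
  obtain ⟨Q, hQ1, hQle⟩ := auxPolar Nt (show (0:ℝ) < a + t by linarith) hbt hdet
  refine ⟨Q, hQ1, ?_⟩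
  have hone : ∑ j : Fin k, ∑ i : Fin k, |(1 : Matrix (Fin k) (Fin k) ℝ) i j| = (k : ℝ) := by
    simp [Matrix.one_apply, apply_ite (abs : ℝ → ℝ)]
  have hR : |Qᵀ.trace| ≤ (k : ℝ) := by
    have := auxTraceQBound hQ1 1
    rwa [Matrix.mul_one, hone] at this
  have hT : |(Qᵀ * N).trace| ≤ B := auxTraceQBound hQ1 N
  have hNtr : |N.trace| ≤ B := auxDiagSumBound N
  have e4 : Ntᵀ * Nt = Nᵀ * N + t • Nᵀ + t • N + (t * t) • (1 : Matrix (Fin k) (Fin k) ℝ) := by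
    rw [hNtdef, transpose_add, transpose_smul, transpose_one]
    rw [Matrix.add_mul, Matrix.mul_add, Matrix.mul_add, Matrix.smul_mul, Matrix.mul_smul,
      Matrix.mul_smul, Matrix.smul_mul, Matrix.one_mul, Matrix.mul_one, smul_smul,
      Matrix.one_mul (1 : Matrix (Fin k) (Fin k) ℝ)]
    abel
  have e5 : (Ntᵀ * Nt).trace = (Nᵀ * N).trace + 2 * t * N.trace + t * t * (k : ℝ) := by
    rw [e4, trace_add, trace_add, trace_add, trace_smul, trace_smul, trace_smul,
      trace_transpose, trace_one]
    simp [smul_eq_mul]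
    ring
  have e6 : (Qᵀ * Nt).trace = (Qᵀ * N).trace + t * Qᵀ.trace := by
    rw [hNtdef, Matrix.mul_add, trace_add, Matrix.mul_smul, trace_smul, Matrix.mul_one,
      smul_eq_mul]
  set T := (Qᵀ * N).trace
  set R := Qᵀ.trace
  have hT' := abs_le.mp hT
  have hR' := abs_le.mp hR
  have hNtr' := abs_le.mp hNtr
  have p1 : (Qᵀ * Nt).trace ≤ T + t * (k : ℝ) := by
    rw [e6]
    have := mul_le_mul_of_nonneg_left hR'.2 ht0.le
    linarith
  have p2 : (a + t) * ((Qᵀ * Nt).trace) ≤ (a + t) * (T + t * (k : ℝ)) :=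
    mul_le_mul_of_nonneg_left p1 (by linarith)
  have p3 : (a + t) * (T + t * (k : ℝ))
      = a * T + t * T + a * (t * (k : ℝ)) + t * (t * (k : ℝ)) := by ring
  have p4 : t * T ≤ t * B := mul_le_mul_of_nonneg_left hT'.2 ht0.le
  have hk0 : (0:ℝ) ≤ (k : ℝ) := Nat.cast_nonneg k
  have p5 : t * (t * (k : ℝ)) ≤ 1 * (t * (k : ℝ)) :=
    mul_le_mul_of_nonneg_right ht1.le (mul_nonneg ht0.le hk0)
  have p6 : -(2 * t * N.trace) ≤ 2 * (t * B) := by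
    have := mul_le_mul_of_nonneg_left hNtr'.1 ht0.le
    nlinarith
  have p7 : (0:ℝ) ≤ t * t * (k : ℝ) := by positivity
  have q : t * K = 3 * (t * B) + a * (t * (k : ℝ)) + 1 * (t * (k : ℝ)) + t := by
    rw [hKdef]; ring
  have hQle' : (Nᵀ * N).trace + 2 * t * N.trace + t * t * (k : ℝ)
      ≤ (a + t) * ((Qᵀ * Nt).trace) := by rw [← e5]; exact hQle
  linarith

end



/-- Squared Frobenius norm of a rectangular real matrix. -/
def frobSq {p q : ℕ} (A : Matrix (Fin p) (Fin q) ℝ) : ℝ :=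
  (Aᵀ * A).trace

/-- Quadratic growth: if `C₀ ⪰ 0` has kernel exactly the column span of `S₀`
(with `S₀ᵀS₀ = m I`), and `lam` is the smallest nonzero eigenvalue of `C₀`
(a lower bound for the Rayleigh quotient on the orthogonal complement of the
kernel), then `Tr(C₀ S Sᵀ) ≥ (lam/2) · min_{Q ∈ O(d)} ‖S - S₀Q‖_F²`. -/
theorem stmt_12 (d m : ℕ) (C₀ : Matrix (Fin (m * d)) (Fin (m * d)) ℝ)
    (hC₀ : C₀.PosSemidef)
    (S₀ : Matrix (Fin (m * d)) (Fin d) ℝ)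
    (hS₀ : S₀ᵀ * S₀ = (m : ℝ) • 1)
    (hker : ∀ v : Fin (m * d) → ℝ,
      C₀.mulVec v = 0 ↔ ∃ w : Fin d → ℝ, v = S₀.mulVec w)
    (lam : ℝ)
    (hlam : ∀ x : Fin (m * d) → ℝ,
      (∀ y : Fin (m * d) → ℝ, C₀.mulVec y = 0 → x ⬝ᵥ y = 0) →
        lam * (x ⬝ᵥ x) ≤ x ⬝ᵥ C₀.mulVec x)
    (S : Matrix (Fin (m * d)) (Fin d) ℝ) (hS : Sᵀ * S = (m : ℝ) • 1) :
    (C₀ * S * Sᵀ).trace ≥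
      (lam / 2) * sInf {x : ℝ | ∃ Q : Matrix (Fin d) (Fin d) ℝ,
        Qᵀ * Q = 1 ∧ x = frobSq (S - S₀ * Q)} := by
  classical
  have hct : ∀ {p q : ℕ} (A : Matrix (Fin p) (Fin q) ℝ), Aᴴ = Aᵀ := fun A => by
    ext i j; simp [conjTranspose_apply]
  set T : Set ℝ := {x : ℝ | ∃ Q : Matrix (Fin d) (Fin d) ℝ,
      Qᵀ * Q = 1 ∧ x = frobSq (S - S₀ * Q)} with hTdef
  have hTne : T.Nonempty := ⟨frobSq (S - S₀ * 1), 1, by simp, rfl⟩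
  have hTnn : ∀ x ∈ T, (0:ℝ) ≤ x := by
    rintro x ⟨Q, hQ, rfl⟩
    unfold frobSq
    have h := posSemidef_conjTranspose_mul_self (S - S₀ * Q)
    rw [hct] at h
    exact auxTraceNonneg h
  have hbdd : BddBelow T := ⟨0, fun x hx => hTnn x hx⟩
  have hLHS0 : (C₀ * S * Sᵀ).trace = (Sᵀ * C₀ * S).trace := by
    rw [Matrix.trace_mul_cycle]
  have hLHSnn : 0 ≤ (C₀ * S * Sᵀ).trace := by
    rw [hLHS0]
    have h := hC₀.conjTranspose_mul_mul_same S
    rw [hct] at h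
    exact auxTraceNonneg h
  by_cases hm : m = 0
  · subst hm
    haveI : IsEmpty (Fin (0 * d)) := by
      rw [Nat.zero_mul]; infer_instance
    have hz : ∀ Q : Matrix (Fin d) (Fin d) ℝ, frobSq (S - S₀ * Q) = 0 := by
      intro Q
      unfold frobSq
      have h0 : ((S - S₀ * Q)ᵀ * (S - S₀ * Q)) = 0 := by
        ext i j
        rw [Matrix.mul_apply]
        simp
      rw [h0, Matrix.trace_zero]
    have hTeq : T = {0} := by
      ext x
      constructor
      · rintro ⟨Q, hQ, rfl⟩
        simp [hz Q]
      · rintro rfl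
        exact ⟨1, by simp, (hz 1).symm⟩
    rw [hTeq, csInf_singleton, mul_zero]
    exact hLHSnn
  have hm0 : 0 < m := Nat.pos_of_ne_zero hm
  have hmR : (0:ℝ) < m := by exact_mod_cast hm0
  set M := S₀ᵀ * S with hMdef
  have hMt : Mᵀ = Sᵀ * S₀ := by rw [hMdef, transpose_mul, transpose_transpose]
  have hCS₀ : C₀ * S₀ = 0 := by
    ext i j
    have h1 : (fun l => S₀ l j) = S₀ *ᵥ (Pi.single j 1) := by
      funext l; simp [Matrix.mulVec_single_one]
    have h2 : C₀ *ᵥ (S₀ *ᵥ (Pi.single j 1)) = 0 := (hker _).mpr ⟨_, rfl⟩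
    have h3 : (C₀ * S₀) i j = (C₀ *ᵥ fun l => S₀ l j) i := by
      simp [Matrix.mul_apply, Matrix.mulVec, dotProduct]
    rw [h3, h1, h2]
    rfl
  have hC₀t : C₀ᵀ = C₀ := by
    have h := hC₀.1.symm; rw [hct] at h; exact h.symm
  have hS₀C : S₀ᵀ * C₀ = 0 := by
    have h : (C₀ * S₀)ᵀ = 0 := by rw [hCS₀]; simp
    rwa [transpose_mul, hC₀t] at h
  set c : ℝ := (m : ℝ)⁻¹ with hcdef
  have hcm : c * (m:ℝ) = 1 := inv_mul_cancel₀ (ne_of_gt hmR)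
  set Y := S - c • (S₀ * M) with hYdef
  have hS₀Y : S₀ᵀ * Y = 0 := by
    show S₀ᵀ * (S - c • (S₀ * M)) = 0
    rw [Matrix.mul_sub, Matrix.mul_smul, ← Matrix.mul_assoc, hS₀, Matrix.smul_mul,
      Matrix.one_mul, smul_smul, hcm, one_smul, ← hMdef, sub_self]
  have hYS₀ : Yᵀ * S₀ = 0 := by
    have h := congrArg Matrix.transpose hS₀Y
    rwa [transpose_mul, transpose_transpose, transpose_zero] at h
  have hYtY : Yᵀ * Y = (m:ℝ) • (1 : Matrix (Fin d) (Fin d) ℝ) - c • (Mᵀ * M) := by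
    have h1 : Yᵀ * Y = Yᵀ * S := by
      show Yᵀ * (S - c • (S₀ * M)) = Yᵀ * S
      rw [Matrix.mul_sub, Matrix.mul_smul, ← Matrix.mul_assoc, hYS₀, Matrix.zero_mul,
        smul_zero, sub_zero]
    rw [h1]
    show (S - c • (S₀ * M))ᵀ * S = _
    rw [transpose_sub, transpose_smul, Matrix.sub_mul, hS, Matrix.smul_mul,
      transpose_mul, Matrix.mul_assoc]
  have hSCS : Sᵀ * C₀ * S = Yᵀ * (C₀ * Y) := by
    have hCY : C₀ * Y = C₀ * S := by
      show C₀ * (S - c • (S₀ * M)) = C₀ * S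
      rw [Matrix.mul_sub, Matrix.mul_smul, ← Matrix.mul_assoc, hCS₀, Matrix.zero_mul,
        smul_zero, sub_zero]
    rw [hCY]
    show _ = (S - c • (S₀ * M))ᵀ * (C₀ * S)
    rw [transpose_sub, transpose_smul, Matrix.sub_mul, Matrix.smul_mul]
    have h2 : (S₀ * M)ᵀ * (C₀ * S) = 0 := by
      rw [transpose_mul, Matrix.mul_assoc, ← Matrix.mul_assoc S₀ᵀ C₀ S, hS₀C,
        Matrix.zero_mul, Matrix.mul_zero]
    rw [h2, smul_zero, sub_zero, Matrix.mul_assoc]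
  have hcol : lam * (Yᵀ * Y).trace ≤ (Yᵀ * (C₀ * Y)).trace := by
    have htr1 : (Yᵀ * Y).trace = ∑ j : Fin d, (fun i => Y i j) ⬝ᵥ (fun i => Y i j) := by
      simp [Matrix.trace, Matrix.diag, Matrix.mul_apply, dotProduct]
    have htr2 : (Yᵀ * (C₀ * Y)).trace
        = ∑ j : Fin d, (fun i => Y i j) ⬝ᵥ (C₀ *ᵥ (fun i => Y i j)) := by
      simp [Matrix.trace, Matrix.diag, Matrix.mul_apply, Matrix.mulVec, dotProduct]
    rw [htr1, htr2, Finset.mul_sum]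
    refine Finset.sum_le_sum fun j _ => ?_
    apply hlam
    intro y hy
    obtain ⟨w, rfl⟩ := (hker y).mp hy
    rw [Matrix.dotProduct_mulVec]
    have hv : (fun i => Y i j) ᵥ* S₀ = 0 := by
      funext l
      have h0 : (Yᵀ * S₀) j l = 0 := by rw [hYS₀]; rfl
      rw [Matrix.mul_apply] at h0
      simpa [Matrix.vecMul, dotProduct, transpose_apply] using h0
    rw [hv, zero_dotProduct]
  have htr0 : (Yᵀ * Y).trace = (m:ℝ) * d - c * (Mᵀ * M).trace := by
    rw [hYtY, Matrix.trace_sub, Matrix.trace_smul, Matrix.trace_smul, Matrix.trace_one]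
    simp [smul_eq_mul, Fintype.card_fin]
  have hMb : (((m:ℝ) ^ 2) • (1 : Matrix (Fin d) (Fin d) ℝ) - Mᵀ * M).PosSemidef := by
    set Rm : Matrix (Fin (m*d)) (Fin (m*d)) ℝ := 1 - c • (S₀ * S₀ᵀ) with hRmdef
    have hRsym : Rmᵀ = Rm := by
      rw [hRmdef, transpose_sub, transpose_one, transpose_smul, transpose_mul,
        transpose_transpose]
    have hSS : (S₀ * S₀ᵀ) * (S₀ * S₀ᵀ) = (m:ℝ) • (S₀ * S₀ᵀ) := by
      rw [Matrix.mul_assoc, ← Matrix.mul_assoc S₀ᵀ S₀ S₀ᵀ, hS₀, Matrix.smul_mul,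
        Matrix.one_mul, Matrix.mul_smul]
    have hRR : Rmᵀ * Rm = Rm := by
      rw [hRsym, hRmdef, Matrix.sub_mul, Matrix.one_mul, Matrix.mul_sub, Matrix.mul_one,
        Matrix.smul_mul, Matrix.mul_smul, smul_smul, hSS, smul_smul]
      have hcc : c * c * (m:ℝ) = c := by rw [mul_assoc, hcm, mul_one]
      rw [hcc, sub_self, sub_zero]
    have hRpsd : Rm.PosSemidef := by
      have h := posSemidef_conjTranspose_mul_self Rm
      rw [hct, hRR] at h
      exact h
    have hmRm : ((m:ℝ) • Rm).PosSemidef := by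
      refine PosSemidef.of_dotProduct_mulVec_nonneg ?_ ?_
      · show ((m:ℝ) • Rm)ᴴ = (m:ℝ) • Rm
        rw [hct, transpose_smul, hRsym]
      · intro x
        rw [star_trivial, Matrix.smul_mulVec, dotProduct_smul, smul_eq_mul]
        have h := hRpsd.dotProduct_mulVec_nonneg x
        rw [star_trivial] at h
        exact mul_nonneg hmR.le h
    have key : Sᵀ * ((m:ℝ) • Rm) * S
        = ((m:ℝ) ^ 2) • (1 : Matrix (Fin d) (Fin d) ℝ) - Mᵀ * M := by
      have e : Sᵀ * Rm * S = (m:ℝ) • (1 : Matrix (Fin d) (Fin d) ℝ) - c • (Mᵀ * M) := by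
        rw [hRmdef, Matrix.mul_sub, Matrix.mul_one, Matrix.sub_mul, hS, Matrix.mul_smul,
          Matrix.smul_mul]
        congr 2
        rw [← Matrix.mul_assoc, Matrix.mul_assoc, hMt, hMdef]
      rw [Matrix.mul_smul, Matrix.smul_mul, e, smul_sub, smul_smul, smul_smul,
        mul_comm ((m:ℝ)) c, hcm, one_smul, sq]
    have h := hmRm.conjTranspose_mul_mul_same S
    rw [hct] at h
    rwa [key] at h
  rcases le_or_gt lam 0 with hl | hl
  · have hsinf : (0:ℝ) ≤ sInf T := le_csInf hTne hTnn
    have h : (lam / 2) * sInf T ≤ 0 := mul_nonpos_of_nonpos_of_nonneg (by linarith) hsinf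
    exact le_trans h hLHSnn
  · have hub : sInf T ≤ 2 * ((m:ℝ) * d) - 2 * (c * (Mᵀ * M).trace) := by
      refine le_of_forall_pos_le_add fun ε hε => ?_
      obtain ⟨Q, hQ1, hQle⟩ := auxPolarEps M hmR hMb (show (0:ℝ) < (m:ℝ) * ε / 2 by positivity)
      have hmem : frobSq (S - S₀ * Q) ∈ T := ⟨Q, hQ1, rfl⟩
      have hval : frobSq (S - S₀ * Q) = 2 * ((m:ℝ) * d) - 2 * (Qᵀ * M).trace := by
        unfold frobSq
        have a1 : Sᵀ * (S₀ * Q) = Mᵀ * Q := by rw [← Matrix.mul_assoc, ← hMt]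
        have a2 : Qᵀ * S₀ᵀ * S = Qᵀ * M := by rw [Matrix.mul_assoc, ← hMdef]
        have a3 : Qᵀ * S₀ᵀ * (S₀ * Q) = (m:ℝ) • (Qᵀ * Q) := by
          rw [Matrix.mul_assoc, ← Matrix.mul_assoc S₀ᵀ S₀ Q, hS₀, Matrix.smul_mul,
            Matrix.one_mul, Matrix.mul_smul]
        have eq1 : (S - S₀ * Q)ᵀ * (S - S₀ * Q)
            = ((m:ℝ) • (1 : Matrix (Fin d) (Fin d) ℝ) - Mᵀ * Q)
              - (Qᵀ * M - (m:ℝ) • (Qᵀ * Q)) := by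
          rw [transpose_sub, transpose_mul, Matrix.sub_mul, Matrix.mul_sub, Matrix.mul_sub,
            hS, a1, a2, a3]
        have e2 : (Mᵀ * Q).trace = (Qᵀ * M).trace := by
          simp only [Matrix.trace, Matrix.diag, Matrix.mul_apply, transpose_apply]
          exact Finset.sum_congr rfl fun j _ => Finset.sum_congr rfl fun k _ => mul_comm _ _
        rw [eq1, Matrix.trace_sub, Matrix.trace_sub, Matrix.trace_sub, hQ1, e2]
        simp only [Matrix.trace_smul, Matrix.trace_one, smul_eq_mul, Fintype.card_fin]
        ring
      have h5 : c * (Mᵀ * M).trace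
          ≤ c * ((m:ℝ) * (Qᵀ * M).trace + (m:ℝ) * ε / 2) :=
        mul_le_mul_of_nonneg_left hQle (by positivity)
      have h6 : c * ((m:ℝ) * (Qᵀ * M).trace) = (Qᵀ * M).trace := by
        rw [← mul_assoc, hcm, one_mul]
      have h7 : c * ((m:ℝ) * ε / 2) = ε / 2 := by
        rw [mul_div_assoc, ← mul_assoc, hcm, one_mul]
      rw [mul_add, h6, h7] at h5
      have h8 := csInf_le hbdd hmem
      rw [hval] at h8
      linarith
    rw [ge_iff_le, hLHS0, hSCS]
    have hA : lam / 2 * sInf T ≤ lam / 2 * (2 * ((m:ℝ) * d) - 2 * (c * (Mᵀ * M).trace)) :=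
      mul_le_mul_of_nonneg_left hub (by linarith)
    have hB : lam / 2 * (2 * ((m:ℝ) * d) - 2 * (c * (Mᵀ * M).trace))
        = lam * (Yᵀ * Y).trace := by
      rw [htr0]; ring
    linarith
end

section
/- Let S_0, S ∈ R^{md×d} satisfy S_0^T S_0 = S^T S = m·I_d, and let U_0 ∈ R^{md×(m-1)d} have orthonormal columns spanning the orthogonal complement of the column space of S_0 (so U_0^T U_0 = I and S_0^T U_0 = 0). Then ||U_0^T S||_F^2 ≥ (1/2) · min over orthogonal Q ∈ O(d) of ||S - S_0 Q||_F^2. -/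
open Matrix

/-!
Put `R = S₀ᵀ S`. Expanding the square gives `‖S - S₀ Q‖² = 2 (m d - tr (Qᵀ R))`, while the
projection identity `S₀ S₀ᵀ + m U₀ U₀ᵀ = m I` gives `Rᵀ R = m² I - m (U₀ᵀ S)ᵀ (U₀ᵀ S)`, hence
`m ‖U₀ᵀ S‖² = m² d - ‖R‖²` and `‖R‖_op ≤ m`. For the orthogonal polar factor `Q = W Vᵀ` of an SVD
`R = W Σ Vᵀ` one has `tr (Qᵀ R) = ∑ σᵢ` and `‖R‖² = ∑ σᵢ² ≤ m ∑ σᵢ`, which is the claim.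
-/

namespace Matrix

theorem real_inner_toLp_transpose {m n : Type*} [Fintype m] (B : Matrix m n ℝ) (i j : n) :
    inner ℝ (WithLp.toLp 2 (Bᵀ i)) (WithLp.toLp 2 (Bᵀ j)) = (Bᵀ * B) i j := by
  simp [EuclideanSpace.inner_eq_star_dotProduct, mul_apply, dotProduct, mul_comm]

theorem posSemidef_transpose_mul_self {m n : Type*} [Fintype m] [Fintype n]
    (A : Matrix m n ℝ) : (Aᵀ * A).PosSemidef := by
  simpa [conjTranspose_eq_transpose_of_trivial] using posSemidef_conjTranspose_mul_self A

section Square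

variable {n : Type*} [Fintype n] [DecidableEq n]

theorem trace_mul_mul_transpose_of_orthogonal {V : Matrix n n ℝ} (hV : Vᵀ * V = 1)
    (A : Matrix n n ℝ) : (V * A * Vᵀ).trace = A.trace := by
  rw [trace_mul_cycle, hV, Matrix.one_mul]

theorem exists_orthogonal_mul_diagonal_of_isDiag {B : Matrix n n ℝ} (hB : (Bᵀ * B).IsDiag) :
    ∃ (W : Matrix n n ℝ) (σ : n → ℝ), Wᵀ * W = 1 ∧ 0 ≤ σ ∧ B = W * diagonal σ := by
  set c : n → EuclideanSpace ℝ n := fun i => WithLp.toLp 2 (Bᵀ i)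
  set s : Set n := {i | c i ≠ 0}
  -- The normalized nonzero columns of `B` are orthonormal; `W` extends them to a basis.
  have hon : Orthonormal ℝ (s.domRestrict fun i => ‖c i‖⁻¹ • c i) := by
    rw [orthonormal_iff_ite]
    rintro ⟨i, hi⟩ ⟨j, -⟩
    by_cases hij : i = j
    · subst hij
      simp [norm_smul, inv_mul_cancel₀ (norm_ne_zero_iff.mpr hi)]
    · simp [real_inner_smul_left, real_inner_smul_right, c, real_inner_toLp_transpose, hB hij,
        hij]
  obtain ⟨b, hb⟩ := hon.exists_orthonormalBasis_extension_of_card_eq finrank_euclideanSpace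
  refine ⟨of fun k j => b j k, fun i => ‖c i‖, ?_, fun i => norm_nonneg _, ?_⟩
  · ext i j
    simpa [EuclideanSpace.inner_eq_star_dotProduct, mul_apply, dotProduct, mul_comm, one_apply]
      using orthonormal_iff_ite.mp b.orthonormal i j
  · ext k i
    by_cases hi : c i = 0
    · have hBki : B k i = 0 := by simpa [c] using congrArg (· k) hi
      simp [hi, hBki]
    · have hci : ‖c i‖ ≠ 0 := norm_ne_zero_iff.mpr hi
      simp only [mul_diagonal, of_apply, hb i hi, PiLp.smul_apply, smul_eq_mul]
      field_simp
      rfl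

theorem exists_svd (R : Matrix n n ℝ) :
    ∃ (W V : Matrix n n ℝ) (σ : n → ℝ),
      Wᵀ * W = 1 ∧ Vᵀ * V = 1 ∧ 0 ≤ σ ∧ R = W * diagonal σ * Vᵀ := by
  have hG : (Rᵀ * R).IsHermitian := by
    simpa [conjTranspose_eq_transpose_of_trivial] using isHermitian_conjTranspose_mul_self R
  set V : Matrix n n ℝ := (hG.eigenvectorUnitary : Matrix n n ℝ)
  have hV : Vᵀ * V = 1 := by
    simpa [star_eq_conjTranspose, conjTranspose_eq_transpose_of_trivial] using
      Unitary.coe_star_mul_self hG.eigenvectorUnitary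
  have hdiag : ((R * V)ᵀ * (R * V)).IsDiag := by
    have hspec := hG.conjStarAlgAut_star_eigenvectorUnitary
    rw [Unitary.conjStarAlgAut_star_apply] at hspec
    simp only [star_eq_conjTranspose, conjTranspose_eq_transpose_of_trivial] at hspec
    rw [transpose_mul, Matrix.mul_assoc, ← Matrix.mul_assoc Rᵀ, ← Matrix.mul_assoc, hspec]
    exact isDiag_diagonal _
  obtain ⟨W, σ, hW, hσ, hRV⟩ := exists_orthogonal_mul_diagonal_of_isDiag hdiag
  refine ⟨W, V, σ, hW, hV, hσ, ?_⟩
  rw [← hRV, Matrix.mul_assoc, mul_eq_one_comm.mp hV, Matrix.mul_one]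

theorem exists_orthogonal_trace_transpose_mul_self_le (R : Matrix n n ℝ) {c : ℝ} (hc : 0 ≤ c)
    (hR : (c ^ 2 • 1 - Rᵀ * R).PosSemidef) :
    ∃ Q : Matrix n n ℝ, Qᵀ * Q = 1 ∧ 0 ≤ (Qᵀ * R).trace ∧
      (Rᵀ * R).trace ≤ c * (Qᵀ * R).trace := by
  obtain ⟨W, V, σ, hW, hV, hσ, rfl⟩ := exists_svd R
  have hW' : ∀ X : Matrix n n ℝ, Wᵀ * (W * X) = X := fun X => by
    rw [← Matrix.mul_assoc, hW, Matrix.one_mul]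
  have hV' : ∀ X : Matrix n n ℝ, Vᵀ * (V * X) = X := fun X => by
    rw [← Matrix.mul_assoc, hV, Matrix.one_mul]
  have hQR : (W * Vᵀ)ᵀ * (W * diagonal σ * Vᵀ) = V * diagonal σ * Vᵀ := by
    simp only [transpose_mul, transpose_transpose, Matrix.mul_assoc, hW']
  have hRR : (W * diagonal σ * Vᵀ)ᵀ * (W * diagonal σ * Vᵀ) = V * diagonal (σ * σ) * Vᵀ := by
    simp only [transpose_mul, transpose_transpose, diagonal_transpose, Matrix.mul_assoc, hW']
    rw [← Matrix.mul_assoc (diagonal σ), diagonal_mul_diagonal]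
    rfl
  have hconj : Vᵀ * (c ^ 2 • 1 - (W * diagonal σ * Vᵀ)ᵀ * (W * diagonal σ * Vᵀ)) * V
      = c ^ 2 • 1 - diagonal (σ * σ) := by
    rw [hRR]
    simp only [Matrix.mul_sub, Matrix.sub_mul, Matrix.mul_smul, Matrix.smul_mul,
      Matrix.mul_one, Matrix.mul_assoc, hV, hV']
  have hσc : ∀ i, σ i ≤ c := fun i => by
    have hdiag := (hR.conjTranspose_mul_mul_same V).diag_nonneg (i := i)
    rw [conjTranspose_eq_transpose_of_trivial, hconj] at hdiag
    have hsq : σ i ^ 2 ≤ c ^ 2 := by simpa [sq] using hdiag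
    exact (pow_le_pow_iff_left₀ (hσ i) hc two_ne_zero).mp hsq
  refine ⟨W * Vᵀ, ?_, ?_, ?_⟩
  · simp only [transpose_mul, transpose_transpose, Matrix.mul_assoc, hW']
    exact mul_eq_one_comm.mp hV
  · rw [hQR, trace_mul_mul_transpose_of_orthogonal hV, trace_diagonal]
    exact Finset.sum_nonneg fun i _ => hσ i
  · rw [hQR, hRR, trace_mul_mul_transpose_of_orthogonal hV,
      trace_mul_mul_transpose_of_orthogonal hV, trace_diagonal, trace_diagonal, Finset.mul_sum]
    exact Finset.sum_le_sum fun i _ => mul_le_mul_of_nonneg_right (hσc i) (hσ i)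

end Square

section Projection

variable {n k l : Type*} [Fintype n] [Fintype k] [Fintype l] [DecidableEq n] [DecidableEq k]

theorem mul_transpose_add_smul_mul_transpose_eq [DecidableEq l] (S₀ : Matrix n k ℝ)
    (U₀ : Matrix n l ℝ) {c : ℝ} (hS₀ : S₀ᵀ * S₀ = c • 1) (hU₀ : U₀ᵀ * U₀ = 1)
    (hSU : S₀ᵀ * U₀ = 0) (hspan : ∀ v, S₀ᵀ *ᵥ v = 0 → ∃ w, v = U₀ *ᵥ w) :
    S₀ * S₀ᵀ + c • (U₀ * U₀ᵀ) = c • 1 := by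
  rw [ext_iff_mulVec]
  intro v
  set p := S₀ *ᵥ (S₀ᵀ *ᵥ v)
  have hker : S₀ᵀ *ᵥ (c • v - p) = 0 := by
    rw [mulVec_sub, mulVec_smul, mulVec_mulVec, hS₀, smul_mulVec, one_mulVec, sub_self]
  obtain ⟨w, hw⟩ := hspan _ hker
  have hUp : U₀ᵀ *ᵥ p = 0 := by
    rw [mulVec_mulVec, ← transpose_transpose S₀, ← transpose_mul, hSU]
    simp
  have hUv : c • (U₀ᵀ *ᵥ v) = w := by
    simpa [mulVec_sub, mulVec_smul, hUp, mulVec_mulVec, hU₀] using congrArg (U₀ᵀ *ᵥ ·) hw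
  rw [add_mulVec, smul_mulVec, ← mulVec_mulVec, ← mulVec_mulVec, ← mulVec_smul, hUv, ← hw,
    smul_mulVec, one_mulVec, add_sub_cancel]

theorem transpose_mul_self_transpose_mul_eq (S₀ S : Matrix n k ℝ) (U₀ : Matrix n l ℝ) {c : ℝ}
    (hproj : S₀ * S₀ᵀ + c • (U₀ * U₀ᵀ) = c • 1) (hS : Sᵀ * S = c • 1) :
    (S₀ᵀ * S)ᵀ * (S₀ᵀ * S) = c ^ 2 • 1 - c • ((U₀ᵀ * S)ᵀ * (U₀ᵀ * S)) := by
  have hS₀ : S₀ * S₀ᵀ = c • 1 - c • (U₀ * U₀ᵀ) := eq_sub_of_add_eq hproj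
  calc (S₀ᵀ * S)ᵀ * (S₀ᵀ * S) = Sᵀ * (S₀ * S₀ᵀ) * S := by
        simp only [transpose_mul, transpose_transpose, Matrix.mul_assoc]
    _ = c • (Sᵀ * S) - c • ((U₀ᵀ * S)ᵀ * (U₀ᵀ * S)) := by
        simp only [hS₀, Matrix.mul_sub, Matrix.sub_mul, Matrix.mul_smul, Matrix.smul_mul,
          Matrix.mul_one, transpose_mul, transpose_transpose, Matrix.mul_assoc]
    _ = c ^ 2 • 1 - c • ((U₀ᵀ * S)ᵀ * (U₀ᵀ * S)) := by rw [hS, smul_smul, sq]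

end Projection

end Matrix

theorem frobSq_nonneg {p q : ℕ} (A : Matrix (Fin p) (Fin q) ℝ) : 0 ≤ frobSq A :=
  (posSemidef_transpose_mul_self A).trace_nonneg

theorem frobSq_sub_mul {p q : ℕ} (S₀ S : Matrix (Fin p) (Fin q) ℝ) (Q : Matrix (Fin q) (Fin q) ℝ)
    {c : ℝ} (hS₀ : S₀ᵀ * S₀ = c • 1) (hS : Sᵀ * S = c • 1) (hQ : Qᵀ * Q = 1) :
    frobSq (S - S₀ * Q) = 2 * (c * q - (Qᵀ * (S₀ᵀ * S)).trace) := by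
  have hcross : (Sᵀ * (S₀ * Q)).trace = (Qᵀ * (S₀ᵀ * S)).trace := by
    rw [← trace_transpose]
    simp only [transpose_mul, transpose_transpose, Matrix.mul_assoc]
  have hquad : (Qᵀ * (S₀ᵀ * (S₀ * Q))).trace = c * q := by
    rw [← Matrix.mul_assoc S₀ᵀ, hS₀, Matrix.smul_mul, Matrix.one_mul, Matrix.mul_smul, hQ]
    simp
  simp only [frobSq, transpose_sub, transpose_mul, Matrix.sub_mul, Matrix.mul_sub, trace_sub,
    Matrix.mul_assoc, hcross, hquad, hS]
  simp
  ring

/-- If `U₀` has orthonormal columns spanning the orthogonal complement of the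
column span of `S₀`, then `‖U₀ᵀ S‖_F² ≥ ½ min_{Q ∈ O(d)} ‖S - S₀Q‖_F²`. -/
theorem stmt_13 (d m : ℕ)
    (S₀ S : Matrix (Fin (m * d)) (Fin d) ℝ)
    (hS₀ : S₀ᵀ * S₀ = (m : ℝ) • 1) (hS : Sᵀ * S = (m : ℝ) • 1)
    (U₀ : Matrix (Fin (m * d)) (Fin ((m - 1) * d)) ℝ)
    (hU₀ : U₀ᵀ * U₀ = 1) (hSU : S₀ᵀ * U₀ = 0)
    (hspan : ∀ v : Fin (m * d) → ℝ, S₀ᵀ.mulVec v = 0 →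
      ∃ w : Fin ((m - 1) * d) → ℝ, v = U₀.mulVec w) :
    frobSq (U₀ᵀ * S) ≥
      (1 / 2 : ℝ) * sInf {x : ℝ | ∃ Q : Matrix (Fin d) (Fin d) ℝ,
        Qᵀ * Q = 1 ∧ x = frobSq (S - S₀ * Q)} := by
  have hm : (0 : ℝ) ≤ m := m.cast_nonneg
  have hgram := transpose_mul_self_transpose_mul_eq S₀ S U₀
    (mul_transpose_add_smul_mul_transpose_eq S₀ U₀ hS₀ hU₀ hSU hspan) hS
  obtain ⟨Q, hQ, htr_nonneg, htr⟩ := exists_orthogonal_trace_transpose_mul_self_le (S₀ᵀ * S) hm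
    (by rw [hgram, sub_sub_cancel]; exact (posSemidef_transpose_mul_self _).smul hm)
  have hfrob : (m : ℝ) * frobSq (U₀ᵀ * S) = m ^ 2 * d - ((S₀ᵀ * S)ᵀ * (S₀ᵀ * S)).trace := by
    rw [hgram, trace_sub, trace_smul, trace_smul, trace_one, frobSq]
    simp
  have hle : sInf {x : ℝ | ∃ Q : Matrix (Fin d) (Fin d) ℝ, Qᵀ * Q = 1 ∧ x = frobSq (S - S₀ * Q)}
      ≤ frobSq (S - S₀ * Q) :=
    csInf_le ⟨0, by rintro _ ⟨Q, -, rfl⟩; exact frobSq_nonneg _⟩ ⟨Q, hQ, rfl⟩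
  rw [frobSq_sub_mul S₀ S Q hS₀ hS hQ] at hle
  rcases hm.eq_or_lt with hm0 | hmpos
  · rw [← hm0] at hle
    linarith [frobSq_nonneg (U₀ᵀ * S)]
  · have hscaled : (m : ℝ) * (m * d - (Qᵀ * (S₀ᵀ * S)).trace) ≤ m * frobSq (U₀ᵀ * S) := by
      rw [hfrob]
      linarith
    linarith [le_of_mul_le_mul_left hscaled hmpos]
end

section
/- Let C_0 and C be real symmetric md×md matrices, with C_0 positive semidefinite with kernel exactly the column span of S_0 ∈ R^{md×d} where S_0^T S_0 = m·I_d. Suppose S* ∈ R^{md×d} satisfies S*^T S* = m·I_d and Tr(C S* S*^T) ≤ Tr(C S_0 Q (S_0 Q)^T) for all orthogonal Q ∈ O(d). Then min over Q ∈ O(d) of ||S* - S_0 Q||_F ≤ 4m·||C - C_0||_F / λ_{d+1}(C_0), where λ_{d+1}(C_0) is the smallest nonzero eigenvalue of C_0. -/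
open Matrix

/-- Frobenius norm of a rectangular real matrix. -/
noncomputable def frobNorm {p q : ℕ} (A : Matrix (Fin p) (Fin q) ℝ) : ℝ :=
  Real.sqrt (Aᵀ * A).trace

/-!
Write `A = S₀ᵀ S*` and let `Q` be an orthogonal matrix maximising `tr (Qᵀ A)`. Maximality makes
`M = Qᵀ A` symmetric (first-order condition along `t ↦ exp (t W)`, `W` skew) and positive
semidefinite (compare with Householder reflections), and `M² = Aᵀ A ≤ m² I` gives `M ≤ m I`,
hence `tr (Aᵀ A) ≤ m tr M`. Projecting `S*` off the column span of `S₀`, which is `ker C₀`, and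
using the spectral gap `λ` of `C₀` then yields the quadratic growth
`λ/2 ‖S* - S₀ Q‖² ≤ tr (C₀ S* S*ᵀ)`.
On the other hand `tr (C₀ S₀ Q (S₀ Q)ᵀ) = 0`, so optimality of `S*` for `C` bounds the same
trace by `tr ((C - C₀) (S₀ Q (S₀ Q)ᵀ - S* S*ᵀ)) ≤ 2 √m ‖C - C₀‖ ‖S* - S₀ Q‖`, because multiplying
by a matrix `X` with `Xᵀ X = m I` scales Frobenius norms by at most `√m`. Comparing the two
bounds gives `‖S* - S₀ Q‖ ≤ 4 √m ‖C - C₀‖ / λ`.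
-/

section Frobenius

variable {p q : ℕ}

lemma trace_transpose_mul_eq_sum (A B : Matrix (Fin p) (Fin q) ℝ) :
    (Aᵀ * B).trace = ∑ x : Fin p × Fin q, A x.1 x.2 * B x.1 x.2 := by
  rw [Fintype.sum_prod_type, Finset.sum_comm]
  simp [trace, mul_apply]

lemma trace_transpose_mul_self_nonneg (A : Matrix (Fin p) (Fin q) ℝ) :
    0 ≤ (Aᵀ * A).trace := by
  rw [trace_transpose_mul_eq_sum]
  exact Finset.sum_nonneg fun x _ => mul_self_nonneg _

lemma frobNorm_nonneg (A : Matrix (Fin p) (Fin q) ℝ) : 0 ≤ frobNorm A :=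
  Real.sqrt_nonneg _

lemma frobNorm_sq (A : Matrix (Fin p) (Fin q) ℝ) : frobNorm A ^ 2 = (Aᵀ * A).trace :=
  Real.sq_sqrt (trace_transpose_mul_self_nonneg A)

lemma frobNorm_transpose (A : Matrix (Fin p) (Fin q) ℝ) : frobNorm Aᵀ = frobNorm A := by
  rw [frobNorm, frobNorm, transpose_transpose, trace_mul_comm]

lemma frobNorm_sub_comm (A B : Matrix (Fin p) (Fin q) ℝ) :
    frobNorm (A - B) = frobNorm (B - A) := by
  rw [frobNorm, frobNorm, ← neg_sub B A, transpose_neg, Matrix.neg_mul, Matrix.mul_neg, neg_neg]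

lemma trace_transpose_mul_le (A B : Matrix (Fin p) (Fin q) ℝ) :
    (Aᵀ * B).trace ≤ frobNorm A * frobNorm B := by
  simp only [frobNorm, trace_transpose_mul_eq_sum, ← sq]
  exact Real.sum_mul_le_sqrt_mul_sqrt _ _ _

lemma frobNorm_sub_sq {X Y : Matrix (Fin p) (Fin q) ℝ} {c : ℝ} (hX : Xᵀ * X = c • 1)
    (hY : Yᵀ * Y = c • 1) : frobNorm (X - Y) ^ 2 = 2 * (c * q - (Yᵀ * X).trace) := by
  have hXY : (Xᵀ * Y).trace = (Yᵀ * X).trace := by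
    rw [← trace_transpose, transpose_mul, transpose_transpose]
  rw [frobNorm_sq, transpose_sub, Matrix.sub_mul, Matrix.mul_sub, Matrix.mul_sub, hX, hY,
    trace_sub, trace_sub, trace_sub, hXY, trace_smul, trace_one, Fintype.card_fin, smul_eq_mul]
  ring

lemma transpose_mul_self_mul_of_orthogonal {S : Matrix (Fin p) (Fin q) ℝ} {c : ℝ}
    (hS : Sᵀ * S = c • 1) {Q : Matrix (Fin q) (Fin q) ℝ} (hQ : Qᵀ * Q = 1) :
    (S * Q)ᵀ * (S * Q) = c • 1 := by
  rw [transpose_mul, Matrix.mul_assoc, ← Matrix.mul_assoc Sᵀ, hS, Matrix.smul_mul,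
    Matrix.one_mul, Matrix.mul_smul, hQ]

end Frobenius

section TraceInequalities

variable {n k : Type*} [Fintype n] [Fintype k]

lemma dotProduct_sq_le (x y : k → ℝ) : (x ⬝ᵥ y) ^ 2 ≤ (x ⬝ᵥ x) * (y ⬝ᵥ y) := by
  simpa only [dotProduct, sq] using Finset.sum_mul_sq_le_sq_mul_sq Finset.univ x y

lemma posSemidef_smul_one_sub_mul_transpose [DecidableEq n] [DecidableEq k] {X : Matrix n k ℝ}
    {c : ℝ} (hc : 0 < c) (hX : Xᵀ * X = c • 1) : (c • 1 - X * Xᵀ).PosSemidef := by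
  set N := c • (1 : Matrix n n ℝ) - X * Xᵀ
  have hNN : Nᴴ * N = c • N := by
    have hX' : X * Xᵀ * (X * Xᵀ) = c • (X * Xᵀ) := by
      rw [Matrix.mul_assoc, ← Matrix.mul_assoc Xᵀ, hX, Matrix.smul_mul, Matrix.one_mul,
        Matrix.mul_smul]
    simp only [N, conjTranspose_eq_transpose_of_trivial, transpose_sub, transpose_smul,
      transpose_one, transpose_mul, transpose_transpose, Matrix.sub_mul, Matrix.mul_sub,
      Matrix.smul_mul, Matrix.mul_smul, Matrix.one_mul, Matrix.mul_one, hX']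
    module
  have hN : N = c⁻¹ • (Nᴴ * N) := by
    rw [hNN, smul_smul, inv_mul_cancel₀ hc.ne', one_smul]
  rw [hN]
  exact (posSemidef_conjTranspose_mul_self N).smul (inv_nonneg.mpr hc.le)

lemma trace_mul_mul_transpose_le [DecidableEq k] {N : Matrix k k ℝ} {c : ℝ}
    (hN : (c • 1 - N).PosSemidef) (B : Matrix n k ℝ) :
    (B * N * Bᵀ).trace ≤ c * (B * Bᵀ).trace := by
  have h := (hN.mul_mul_conjTranspose_same B).trace_nonneg
  rw [conjTranspose_eq_transpose_of_trivial, Matrix.mul_sub, Matrix.sub_mul, trace_sub,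
    Matrix.mul_smul, Matrix.mul_one, Matrix.smul_mul, trace_smul, smul_eq_mul] at h
  linarith

lemma trace_transpose_mul_mul_eq_sum (P : Matrix n k ℝ) (N : Matrix n n ℝ) :
    (Pᵀ * N * P).trace = ∑ j, Pᵀ j ⬝ᵥ N *ᵥ Pᵀ j := by
  simp only [trace, diag, mul_apply, mulVec, dotProduct, transpose_apply, Finset.sum_mul,
    Finset.mul_sum, mul_assoc]
  exact Finset.sum_congr rfl fun j _ => Finset.sum_comm

lemma mul_trace_le_of_forall_vecMul_eq_zero [DecidableEq n] {C₀ : Matrix n n ℝ} {lam : ℝ}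
    (hlam : ∀ x, (∀ y, C₀ *ᵥ y = 0 → x ⬝ᵥ y = 0) → lam * (x ⬝ᵥ x) ≤ x ⬝ᵥ C₀ *ᵥ x)
    {P : Matrix n k ℝ} (hP : ∀ y, C₀ *ᵥ y = 0 → y ᵥ* P = 0) :
    lam * (Pᵀ * P).trace ≤ (Pᵀ * C₀ * P).trace := by
  have h1 := trace_transpose_mul_mul_eq_sum P 1
  simp only [Matrix.mul_one, one_mulVec] at h1
  rw [h1, trace_transpose_mul_mul_eq_sum, Finset.mul_sum]
  refine Finset.sum_le_sum fun j _ => hlam _ fun y hy => ?_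
  rw [dotProduct_comm]
  exact congrFun (hP y hy) j

/- The left side is `λ ‖P‖²` for the component `P` of `S` orthogonal to the columns of `S₀`;
their span contains `ker C₀`, so `hlam` applies to every column of `P`. -/
lemma lam_mul_le_trace_mul_mul_transpose [DecidableEq n] [DecidableEq k] {C₀ : Matrix n n ℝ}
    {S₀ S : Matrix n k ℝ} {c lam : ℝ} (hc : 0 < c) (hC₀ : C₀ᵀ = C₀) (hS₀ : S₀ᵀ * S₀ = c • 1)
    (hS : Sᵀ * S = c • 1) (hC₀S₀ : C₀ * S₀ = 0) (hker : ∀ y, C₀ *ᵥ y = 0 → ∃ w, y = S₀ *ᵥ w)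
    (hlam : ∀ x, (∀ y, C₀ *ᵥ y = 0 → x ⬝ᵥ y = 0) → lam * (x ⬝ᵥ x) ≤ x ⬝ᵥ C₀ *ᵥ x) :
    lam * (c * Fintype.card k - c⁻¹ * ((S₀ᵀ * S)ᵀ * (S₀ᵀ * S)).trace)
      ≤ (C₀ * S * Sᵀ).trace := by
  set P := S - c⁻¹ • (S₀ * (S₀ᵀ * S))
  have hS₀P : S₀ᵀ * P = 0 := by
    rw [Matrix.mul_sub, Matrix.mul_smul, ← Matrix.mul_assoc, hS₀, Matrix.smul_mul,
      Matrix.one_mul, smul_smul, inv_mul_cancel₀ hc.ne', one_smul, sub_self]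
  have hC₀P : C₀ * P = C₀ * S := by
    rw [Matrix.mul_sub, Matrix.mul_smul, ← Matrix.mul_assoc, hC₀S₀, Matrix.zero_mul, smul_zero,
      sub_zero]
  have hPP : Pᵀ * P = Pᵀ * S := by
    have hPS₀ : Pᵀ * S₀ = 0 := by
      rw [← transpose_transpose S₀, ← transpose_mul, hS₀P, transpose_zero]
    rw [Matrix.mul_sub, Matrix.mul_smul, ← Matrix.mul_assoc, hPS₀, Matrix.zero_mul, smul_zero,
      sub_zero]
  have hPPtr : (Pᵀ * P).trace = c * Fintype.card k - c⁻¹ * ((S₀ᵀ * S)ᵀ * (S₀ᵀ * S)).trace := by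
    rw [hPP, transpose_sub, transpose_smul, Matrix.sub_mul, Matrix.smul_mul, hS, transpose_mul,
      Matrix.mul_assoc, trace_sub, trace_smul, trace_smul, trace_one, smul_eq_mul, smul_eq_mul]
  have hPC : (Pᵀ * C₀ * P).trace = (C₀ * S * Sᵀ).trace := by
    rw [← hC₀, ← transpose_mul, hC₀P, transpose_mul, hC₀, Matrix.mul_assoc, hC₀P,
      trace_mul_comm, Matrix.mul_assoc]
  rw [← hPPtr, ← hPC]
  refine mul_trace_le_of_forall_vecMul_eq_zero hlam fun y hy => ?_
  obtain ⟨w, rfl⟩ := hker y hy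
  rw [← vecMul_transpose, vecMul_vecMul, hS₀P, vecMul_zero]

end TraceInequalities

section Procrustes

variable {k : Type*} [Fintype k] [DecidableEq k]

lemma isCompact_setOf_transpose_mul_self_eq_one :
    IsCompact {Q : Matrix k k ℝ | Qᵀ * Q = 1} := by
  let _ : NormedAddCommGroup (Matrix k k ℝ) := Matrix.normedAddCommGroup
  have : ProperSpace (Matrix k k ℝ) := inferInstanceAs (ProperSpace (k → k → ℝ))
  refine Metric.isCompact_of_isClosed_isBounded (isClosed_singleton.preimage (by fun_prop))
    ((Metric.isBounded_closedBall (x := 0) (r := 1)).subset fun Q hQ => ?_)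
  rw [mem_closedBall_zero_iff, Matrix.norm_le_iff zero_le_one]
  intro i j
  have hcol : ∑ l, Q l j * Q l j = 1 := by
    simpa [mul_apply] using congrFun (congrFun hQ j) j
  rw [Real.norm_eq_abs, abs_le_one_iff_mul_self_le_one, ← hcol]
  exact Finset.single_le_sum (fun l _ => mul_self_nonneg (Q l j)) (Finset.mem_univ i)

lemma exists_forall_trace_transpose_mul_le (A : Matrix k k ℝ) :
    ∃ Q : Matrix k k ℝ, Qᵀ * Q = 1 ∧
      ∀ R : Matrix k k ℝ, Rᵀ * R = 1 → (Rᵀ * A).trace ≤ (Qᵀ * A).trace := by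
  obtain ⟨Q, hQ, hmax⟩ := isCompact_setOf_transpose_mul_self_eq_one.exists_isMaxOn
    ⟨1, by simp⟩ (f := fun Q : Matrix k k ℝ => (Qᵀ * A).trace) (by fun_prop)
  exact ⟨Q, hQ, fun R hR => hmax hR⟩

variable {M : Matrix k k ℝ}

/- `t ↦ exp (t W)` is a curve of orthogonal matrices through `1`, so the derivative of
`t ↦ tr (exp (t W) M)` vanishes at `0`. -/
open scoped Matrix.Norms.Operator in
lemma trace_mul_eq_zero_of_forall_trace_mul_le
    (hM : ∀ R : Matrix k k ℝ, Rᵀ * R = 1 → (R * M).trace ≤ M.trace)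
    {W : Matrix k k ℝ} (hW : Wᵀ = -W) : (W * M).trace = 0 := by
  have horth (t : ℝ) : (NormedSpace.exp (t • W))ᵀ * NormedSpace.exp (t • W) = 1 := by
    rw [← Matrix.exp_transpose, transpose_smul, hW, smul_neg,
      ← Matrix.exp_add_of_commute _ _ (Commute.refl (t • W)).neg_left, neg_add_cancel,
      NormedSpace.exp_zero]
  have hmax : IsLocalMax (fun t : ℝ => (NormedSpace.exp (t • W) * M).trace) 0 :=
    Filter.Eventually.of_forall fun t => by
      simpa only [zero_smul, NormedSpace.exp_zero, Matrix.one_mul] using hM _ (horth t)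
  have hderiv := (hasDerivAt_exp_smul_const W (0 : ℝ)).mul_const M
  rw [zero_smul, NormedSpace.exp_zero, Matrix.one_mul] at hderiv
  exact hmax.hasDerivAt_eq_zero
    ((traceLinearMap k ℝ ℝ).toContinuousLinearMap.hasFDerivAt.comp_hasDerivAt 0 hderiv)

lemma transpose_eq_of_forall_trace_mul_le
    (hM : ∀ R : Matrix k k ℝ, Rᵀ * R = 1 → (R * M).trace ≤ M.trace) : Mᵀ = M := by
  ext i j
  have h := trace_mul_eq_zero_of_forall_trace_mul_le hM
    (W := single i j 1 - single j i 1) (by simp [transpose_sub])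
  rw [Matrix.sub_mul, trace_sub, trace_single_mul, trace_single_mul, one_smul, one_smul] at h
  rw [transpose_apply]
  linarith

/- Compare with the reflection `R = 1 - (2 / v ⬝ᵥ v) v vᵀ`. -/
lemma dotProduct_mulVec_nonneg_of_forall_trace_mul_le
    (hM : ∀ R : Matrix k k ℝ, Rᵀ * R = 1 → (R * M).trace ≤ M.trace) (v : k → ℝ) :
    0 ≤ v ⬝ᵥ M *ᵥ v := by
  rcases eq_or_ne v 0 with rfl | hv
  · simp
  have hρ : 0 < v ⬝ᵥ v := by simpa using dotProduct_star_self_pos_iff.mpr hv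
  set R := (1 : Matrix k k ℝ) - (2 / (v ⬝ᵥ v)) • vecMulVec v v
  have hR : Rᵀ * R = 1 := by
    simp only [R, transpose_sub, transpose_one, transpose_smul, transpose_vecMulVec,
      Matrix.sub_mul, Matrix.mul_sub, Matrix.one_mul, Matrix.mul_one, Matrix.smul_mul,
      Matrix.mul_smul, vecMulVec_mul_vecMulVec, vecMulVec_smul, smul_smul]
    rw [div_mul_cancel₀ 2 hρ.ne']
    module
  have h := hM R hR
  simp only [R, Matrix.sub_mul, Matrix.one_mul, Matrix.smul_mul, trace_sub, trace_smul,
    vecMulVec_mul, trace_vecMulVec, smul_eq_mul] at h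
  rw [dotProduct_comm v (v ᵥ* M), ← dotProduct_mulVec] at h
  exact (mul_nonneg_iff_of_pos_left (show 0 < 2 / (v ⬝ᵥ v) by positivity)).mp (by linarith)

theorem exists_orthogonal_posSemidef_transpose_mul (A : Matrix k k ℝ) :
    ∃ Q : Matrix k k ℝ, Qᵀ * Q = 1 ∧ (Qᵀ * A).PosSemidef := by
  obtain ⟨Q, hQ, hmax⟩ := exists_forall_trace_transpose_mul_le A
  have hM (R : Matrix k k ℝ) (hR : Rᵀ * R = 1) : (R * (Qᵀ * A)).trace ≤ (Qᵀ * A).trace := by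
    have hQR : (Q * Rᵀ)ᵀ * (Q * Rᵀ) = 1 := by
      rw [transpose_mul, transpose_transpose, Matrix.mul_assoc, ← Matrix.mul_assoc Qᵀ, hQ,
        Matrix.one_mul, mul_eq_one_comm.mp hR]
    simpa only [transpose_mul, transpose_transpose, Matrix.mul_assoc] using hmax _ hQR
  refine ⟨Q, hQ, .of_dotProduct_mulVec_nonneg ?_ fun v => ?_⟩
  · exact transpose_eq_of_forall_trace_mul_le hM
  · simpa using dotProduct_mulVec_nonneg_of_forall_trace_mul_le hM v

lemma posSemidef_smul_one_sub_of_posSemidef_sq_sub {c : ℝ} (hc : 0 ≤ c) (hM : Mᵀ = M)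
    (h : (c ^ 2 • 1 - Mᵀ * M).PosSemidef) : (c • 1 - M).PosSemidef := by
  refine .of_dotProduct_mulVec_nonneg ?_ fun x => ?_
  · simp [IsHermitian, conjTranspose_eq_transpose_of_trivial, transpose_sub, hM]
  have hx := h.dotProduct_mulVec_nonneg x
  simp only [star_trivial, sub_mulVec, smul_mulVec, one_mulVec, dotProduct_sub, dotProduct_smul,
    smul_eq_mul, ← mulVec_mulVec, dotProduct_mulVec x Mᵀ, vecMul_transpose] at hx ⊢
  have hxx : 0 ≤ x ⬝ᵥ x := by simpa using dotProduct_star_self_nonneg x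
  have hsq : (x ⬝ᵥ M *ᵥ x) ^ 2 ≤ (c * (x ⬝ᵥ x)) ^ 2 :=
    (dotProduct_sq_le x (M *ᵥ x)).trans (by nlinarith [mul_nonneg hxx hx])
  linarith [le_abs_self (x ⬝ᵥ M *ᵥ x), abs_le_of_sq_le_sq hsq (mul_nonneg hc hxx)]

open scoped MatrixOrder in
lemma trace_transpose_mul_self_le {c : ℝ} (hc : 0 ≤ c) (hM : M.PosSemidef)
    (h : (c ^ 2 • 1 - Mᵀ * M).PosSemidef) : (Mᵀ * M).trace ≤ c * M.trace := by
  have hMT : Mᵀ = M := hM.isHermitian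
  obtain ⟨B, hB⟩ := CStarAlgebra.nonneg_iff_eq_star_mul_self.mp hM.nonneg
  rw [star_eq_conjTranspose, conjTranspose_eq_transpose_of_trivial] at hB
  calc (Mᵀ * M).trace = (M * (Bᵀ * B)).trace := by rw [hMT, ← hB]
    _ = (B * M * Bᵀ).trace := by rw [← Matrix.mul_assoc, trace_mul_comm, ← Matrix.mul_assoc]
    _ ≤ c * (B * Bᵀ).trace :=
        trace_mul_mul_transpose_le (posSemidef_smul_one_sub_of_posSemidef_sq_sub hc hMT h) B
    _ = c * M.trace := by rw [trace_mul_comm, ← hB]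

end Procrustes

section Stability

variable {p q : ℕ}

lemma frobNorm_mul_le {r : ℕ} {X : Matrix (Fin p) (Fin q) ℝ} {c : ℝ} (hc : 0 < c)
    (hX : Xᵀ * X = c • 1) (D : Matrix (Fin r) (Fin p) ℝ) :
    frobNorm (D * X) ≤ √c * frobNorm D := by
  have h : ((D * X)ᵀ * (D * X)).trace ≤ c * (Dᵀ * D).trace :=
    calc ((D * X)ᵀ * (D * X)).trace = (D * (X * Xᵀ) * Dᵀ).trace := by
          rw [trace_mul_comm, transpose_mul]; simp only [Matrix.mul_assoc]
      _ ≤ c * (D * Dᵀ).trace :=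
          trace_mul_mul_transpose_le (posSemidef_smul_one_sub_mul_transpose hc hX) D
      _ = c * (Dᵀ * D).trace := by rw [trace_mul_comm]
  rw [frobNorm, frobNorm, ← Real.sqrt_mul hc.le]
  exact Real.sqrt_le_sqrt h

lemma trace_mul_mul_transpose_sub_le {X Y : Matrix (Fin p) (Fin q) ℝ} {c : ℝ} (hc : 0 < c)
    (hX : Xᵀ * X = c • 1) (hY : Yᵀ * Y = c • 1) (D : Matrix (Fin p) (Fin p) ℝ) :
    (D * X * Xᵀ).trace - (D * Y * Yᵀ).trace ≤ 2 * √c * frobNorm D * frobNorm (X - Y) := by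
  have hsplit : (D * X * Xᵀ).trace - (D * Y * Yᵀ).trace
      = ((X - Y)ᵀ * (D * X)).trace + ((Dᵀ * Y)ᵀ * (X - Y)).trace := by
    have e1 : ((X - Y)ᵀ * (D * X)).trace = (D * X * (X - Y)ᵀ).trace := trace_mul_comm _ _
    have e2 : ((Dᵀ * Y)ᵀ * (X - Y)).trace = (D * (X - Y) * Yᵀ).trace := by
      rw [transpose_mul, transpose_transpose, Matrix.mul_assoc, trace_mul_comm]
    rw [e1, e2, ← trace_add, ← trace_sub]
    congr 1
    simp only [transpose_sub, Matrix.mul_sub, Matrix.sub_mul]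
    abel
  have hE := frobNorm_nonneg (X - Y)
  calc (D * X * Xᵀ).trace - (D * Y * Yᵀ).trace
      ≤ frobNorm (X - Y) * frobNorm (D * X) + frobNorm (Dᵀ * Y) * frobNorm (X - Y) :=
        hsplit ▸ add_le_add (trace_transpose_mul_le _ _) (trace_transpose_mul_le _ _)
    _ ≤ frobNorm (X - Y) * (√c * frobNorm D) + √c * frobNorm Dᵀ * frobNorm (X - Y) :=
        add_le_add (mul_le_mul_of_nonneg_left (frobNorm_mul_le hc hX D) hE)
          (mul_le_mul_of_nonneg_right (frobNorm_mul_le hc hY Dᵀ) hE)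
    _ = 2 * √c * frobNorm D * frobNorm (X - Y) := by rw [frobNorm_transpose]; ring

lemma trace_mul_mul_transpose_le_of_trace_le {C₀ C : Matrix (Fin p) (Fin p) ℝ}
    {X Y : Matrix (Fin p) (Fin q) ℝ} {c : ℝ} (hc : 0 < c) (hX : Xᵀ * X = c • 1)
    (hY : Yᵀ * Y = c • 1) (hC₀Y : C₀ * Y = 0)
    (hopt : (C * X * Xᵀ).trace ≤ (C * Y * Yᵀ).trace) :
    (C₀ * X * Xᵀ).trace ≤ 2 * √c * frobNorm (C - C₀) * frobNorm (X - Y) := by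
  have h := trace_mul_mul_transpose_sub_le hc hY hX (C - C₀)
  rw [frobNorm_sub_comm Y] at h
  simp only [Matrix.sub_mul, trace_sub, hC₀Y, Matrix.zero_mul, trace_zero] at h
  linarith

theorem exists_orthogonal_quadratic_growth {C₀ : Matrix (Fin p) (Fin p) ℝ}
    {S₀ S : Matrix (Fin p) (Fin q) ℝ} {c lam : ℝ} (hc : 0 < c) (hlam₀ : 0 ≤ lam)
    (hC₀ : C₀ᵀ = C₀) (hS₀ : S₀ᵀ * S₀ = c • 1) (hS : Sᵀ * S = c • 1) (hC₀S₀ : C₀ * S₀ = 0)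
    (hker : ∀ y, C₀ *ᵥ y = 0 → ∃ w, y = S₀ *ᵥ w)
    (hlam : ∀ x, (∀ y, C₀ *ᵥ y = 0 → x ⬝ᵥ y = 0) → lam * (x ⬝ᵥ x) ≤ x ⬝ᵥ C₀ *ᵥ x) :
    ∃ Q : Matrix (Fin q) (Fin q) ℝ, Qᵀ * Q = 1 ∧
      lam / 2 * frobNorm (S - S₀ * Q) ^ 2 ≤ (C₀ * S * Sᵀ).trace := by
  set A := S₀ᵀ * S
  obtain ⟨Q, hQ, hM⟩ := exists_orthogonal_posSemidef_transpose_mul A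
  have hMM : (Qᵀ * A)ᵀ * (Qᵀ * A) = Aᵀ * A := by
    rw [transpose_mul, transpose_transpose, Matrix.mul_assoc, ← Matrix.mul_assoc Q,
      mul_eq_one_comm.mp hQ, Matrix.one_mul]
  have hAA : (c ^ 2 • 1 - Aᵀ * A).PosSemidef := by
    have h := (posSemidef_smul_one_sub_mul_transpose hc hS₀).conjTranspose_mul_mul_same S
    rw [conjTranspose_eq_transpose_of_trivial, Matrix.mul_sub, Matrix.sub_mul, Matrix.mul_smul,
      Matrix.mul_one, Matrix.smul_mul, hS, smul_smul, ← sq] at h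
    simpa only [A, transpose_mul, transpose_transpose, Matrix.mul_assoc] using h
  have hnuc : c⁻¹ * (Aᵀ * A).trace ≤ (Qᵀ * A).trace := by
    rw [inv_mul_le_iff₀ hc, ← hMM]
    exact trace_transpose_mul_self_le hc.le hM (hMM ▸ hAA)
  have hdist := frobNorm_sub_sq hS (transpose_mul_self_mul_of_orthogonal hS₀ hQ)
  rw [transpose_mul, Matrix.mul_assoc] at hdist
  have hgrowth := lam_mul_le_trace_mul_mul_transpose hc hC₀ hS₀ hS hC₀S₀ hker hlam
  rw [Fintype.card_fin] at hgrowth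
  refine ⟨Q, hQ, ?_⟩
  calc lam / 2 * frobNorm (S - S₀ * Q) ^ 2 = lam * (c * q - (Qᵀ * A).trace) := by
        rw [hdist]; ring
    _ ≤ lam * (c * q - c⁻¹ * (Aᵀ * A).trace) := by gcongr
    _ ≤ (C₀ * S * Sᵀ).trace := hgrowth

lemma le_div_of_half_mul_sq_le {lam a δ : ℝ} (hlam : 0 < lam) (ha : 0 ≤ a) (hδ : 0 ≤ δ)
    (h : lam / 2 * δ ^ 2 ≤ 2 * a * δ) : δ ≤ 4 * a / lam := by
  rw [le_div_iff₀ hlam]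
  rcases hδ.eq_or_lt with rfl | hδ
  · linarith
  nlinarith

theorem exists_orthogonal_frobNorm_sub_le {C₀ C : Matrix (Fin p) (Fin p) ℝ}
    {S₀ S : Matrix (Fin p) (Fin q) ℝ} {c lam : ℝ} (hc : 0 < c) (hlam_pos : 0 < lam)
    (hC₀ : C₀ᵀ = C₀) (hS₀ : S₀ᵀ * S₀ = c • 1) (hS : Sᵀ * S = c • 1)
    (hker : ∀ v, C₀ *ᵥ v = 0 ↔ ∃ w, v = S₀ *ᵥ w)
    (hlam : ∀ x, (∀ y, C₀ *ᵥ y = 0 → x ⬝ᵥ y = 0) → lam * (x ⬝ᵥ x) ≤ x ⬝ᵥ C₀ *ᵥ x)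
    (hopt : ∀ Q : Matrix (Fin q) (Fin q) ℝ, Qᵀ * Q = 1 →
      (C * S * Sᵀ).trace ≤ (C * (S₀ * Q) * (S₀ * Q)ᵀ).trace) :
    ∃ Q : Matrix (Fin q) (Fin q) ℝ, Qᵀ * Q = 1 ∧
      frobNorm (S - S₀ * Q) ≤ 4 * (√c * frobNorm (C - C₀)) / lam := by
  have hC₀S₀ : C₀ * S₀ = 0 :=
    ext_iff_mulVec.mpr fun w => by rw [← mulVec_mulVec, (hker _).mpr ⟨w, rfl⟩, zero_mulVec]
  obtain ⟨Q, hQ, hgrowth⟩ := exists_orthogonal_quadratic_growth hc hlam_pos.le hC₀ hS₀ hS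
    hC₀S₀ (fun y => (hker y).mp) hlam
  have hlip := trace_mul_mul_transpose_le_of_trace_le hc hS (transpose_mul_self_mul_of_orthogonal hS₀ hQ)
    (by rw [← Matrix.mul_assoc, hC₀S₀, Matrix.zero_mul]) (hopt Q hQ)
  have hD := frobNorm_nonneg (C - C₀)
  exact ⟨Q, hQ, le_div_of_half_mul_sq_le hlam_pos (by positivity) (frobNorm_nonneg _)
    (by linarith)⟩

end Stability

theorem stmt_14_general (d m : ℕ)
    (C₀ C : Matrix (Fin (m * d)) (Fin (m * d)) ℝ)
    (hC₀sym : C₀ᵀ = C₀)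
    (S₀ : Matrix (Fin (m * d)) (Fin d) ℝ)
    (hS₀ : S₀ᵀ * S₀ = (m : ℝ) • 1)
    (hker : ∀ v : Fin (m * d) → ℝ,
      C₀.mulVec v = 0 ↔ ∃ w : Fin d → ℝ, v = S₀.mulVec w)
    (lam : ℝ) (hlam_pos : 0 < lam)
    (hlam : ∀ x : Fin (m * d) → ℝ,
      (∀ y : Fin (m * d) → ℝ, C₀.mulVec y = 0 → x ⬝ᵥ y = 0) →
        lam * (x ⬝ᵥ x) ≤ x ⬝ᵥ C₀.mulVec x)
    (Sstar : Matrix (Fin (m * d)) (Fin d) ℝ)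
    (hSstar : Sstarᵀ * Sstar = (m : ℝ) • 1)
    (hopt : ∀ Q : Matrix (Fin d) (Fin d) ℝ, Qᵀ * Q = 1 →
      (C * Sstar * Sstarᵀ).trace ≤ (C * (S₀ * Q) * (S₀ * Q)ᵀ).trace) :
    sInf {x : ℝ | ∃ Q : Matrix (Fin d) (Fin d) ℝ,
        Qᵀ * Q = 1 ∧ x = frobNorm (Sstar - S₀ * Q)}
      ≤ 4 * m * frobNorm (C - C₀) / lam := by
  suffices ∃ Q : Matrix (Fin d) (Fin d) ℝ, Qᵀ * Q = 1 ∧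
      frobNorm (Sstar - S₀ * Q) ≤ 4 * m * frobNorm (C - C₀) / lam by
    obtain ⟨Q, hQ, hle⟩ := this
    refine le_trans (csInf_le ?_ ?_) hle
    · exact ⟨0, by rintro _ ⟨Q, -, rfl⟩; exact frobNorm_nonneg _⟩
    · exact ⟨Q, hQ, rfl⟩
  rcases Nat.eq_zero_or_pos m with rfl | hm
  · have : IsEmpty (Fin (0 * d)) := by rw [Nat.zero_mul]; infer_instance
    refine ⟨1, by simp, ?_⟩
    rw [Subsingleton.elim (Sstar - S₀ * 1) 0]
    simp [frobNorm]
  obtain ⟨Q, hQ, hle⟩ := exists_orthogonal_frobNorm_sub_le (by exact_mod_cast hm) hlam_pos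
    hC₀sym hS₀ hSstar hker hlam hopt
  have hsqrt : √(m : ℝ) ≤ m := Real.sqrt_le_self_iff.mpr (Or.inr (by exact_mod_cast hm))
  have hD := frobNorm_nonneg (C - C₀)
  refine ⟨Q, hQ, hle.trans ?_⟩
  rw [← mul_assoc]
  gcongr

/-- Stability of the optimal alignment: if `S*` is optimal for the perturbed
matrix `C`, then `min_{Q ∈ O(d)} ‖S* - S₀Q‖_F ≤ 4m ‖C - C₀‖_F / λ_{d+1}(C₀)`. -/
theorem stmt_14 (d m : ℕ)
    (C₀ C : Matrix (Fin (m * d)) (Fin (m * d)) ℝ)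
    (hC₀sym : C₀ᵀ = C₀) (hCsym : Cᵀ = C)
    (hC₀ : C₀.PosSemidef)
    (S₀ : Matrix (Fin (m * d)) (Fin d) ℝ)
    (hS₀ : S₀ᵀ * S₀ = (m : ℝ) • 1)
    (hker : ∀ v : Fin (m * d) → ℝ,
      C₀.mulVec v = 0 ↔ ∃ w : Fin d → ℝ, v = S₀.mulVec w)
    (lam : ℝ) (hlam_pos : 0 < lam)
    (hlam : ∀ x : Fin (m * d) → ℝ,
      (∀ y : Fin (m * d) → ℝ, C₀.mulVec y = 0 → x ⬝ᵥ y = 0) →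
        lam * (x ⬝ᵥ x) ≤ x ⬝ᵥ C₀.mulVec x)
    (Sstar : Matrix (Fin (m * d)) (Fin d) ℝ)
    (hSstar : Sstarᵀ * Sstar = (m : ℝ) • 1)
    (hopt : ∀ Q : Matrix (Fin d) (Fin d) ℝ, Qᵀ * Q = 1 →
      (C * Sstar * Sstarᵀ).trace ≤ (C * (S₀ * Q) * (S₀ * Q)ᵀ).trace) :
    sInf {x : ℝ | ∃ Q : Matrix (Fin d) (Fin d) ℝ,
        Qᵀ * Q = 1 ∧ x = frobNorm (Sstar - S₀ * Q)}
      ≤ 4 * m * frobNorm (C - C₀) / lam :=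
  stmt_14_general d m C₀ C hC₀sym S₀ hS₀ hker lam hlam_pos hlam Sstar hSstar hopt
end
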